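/- arXiv:1302.3136 — 4 statements merged into one kernel-verified Lean document; each statement's English description precedes it below -/
import Mathlib

section
/- Let A ∈ ℝ^{p×n} with p < n and B ∈ ℝ^{m×n}, and let U be a matrix whose columns form a basis of the null space of A. Then the stacked matrix [A; B] has full row rank if and only if both A and BU have full row rank. -/
/-! `[A; B]` has full row rank iff `x ↦ (A x, B x)` is onto. That map is onto iff `A` is onto and
`B` maps `ker A` onto `ℝ^m`; since `ker A = range U`, the latter says exactly that `B U` is onto. -/

open Function Matrix

theorem Matrix.rank_eq_card_iff_surjective_mulVec {m n K : Type*} [Field K] [Fintype m]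
    [Fintype n] (M : Matrix m n K) : M.rank = Fintype.card m ↔ Surjective M.mulVec := by
  rw [rank, ← coe_mulVecLin, ← LinearMap.range_eq_top, Submodule.eq_top_iff_finrank_eq,
    Module.finrank_fintype_fun_eq_card]

theorem LinearMap.surjective_prod_iff {R M M₂ M₃ : Type*} [Ring R] [AddCommGroup M]
    [AddCommGroup M₂] [AddCommGroup M₃] [Module R M] [Module R M₂] [Module R M₃]
    (f : M →ₗ[R] M₂) (g : M →ₗ[R] M₃) :
    Surjective (f.prod g) ↔ Surjective f ∧ (ker f).map g = ⊤ := by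
  refine ⟨fun h => ⟨fun y => ?_, Submodule.eq_top_iff'.2 fun z => ?_⟩, fun ⟨hf, hg⟩ ⟨y, z⟩ => ?_⟩
  · obtain ⟨x, hx⟩ := h (y, 0)
    exact ⟨x, congrArg Prod.fst hx⟩
  · obtain ⟨x, hx⟩ := h (0, z)
    exact ⟨x, congrArg Prod.fst hx, congrArg Prod.snd hx⟩
  · obtain ⟨x, rfl⟩ := hf y
    obtain ⟨k, hk, hgk⟩ := (Submodule.eq_top_iff'.1 hg) (z - g x)
    refine ⟨x + k, ?_⟩
    simp_all [mem_ker]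

theorem Matrix.surjective_fromRows_mulVec_iff {R m₁ m₂ n : Type*} [CommRing R] [Fintype n]
    (A : Matrix m₁ n R) (B : Matrix m₂ n R) :
    Surjective (fromRows A B).mulVec ↔ Surjective (A.mulVecLin.prod B.mulVecLin) := by
  have : (fromRows A B).mulVec = (Equiv.sumArrowEquivProdArrow m₁ m₂ R).symm ∘
      (A.mulVecLin.prod B.mulVecLin) := by
    ext v i
    rcases i with i | i <;> simp [fromRows_mulVec]
  rw [this, Equiv.comp_surjective]

theorem Matrix.map_ker_mulVecLin_eq_range_mul {R l m m₂ n : Type*} [CommRing R] [Fintype n]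
    [Fintype l] {A : Matrix m n R} {U : Matrix n l R}
    (hU : LinearMap.ker A.mulVecLin = LinearMap.range U.mulVecLin) (B : Matrix m₂ n R) :
    (LinearMap.ker A.mulVecLin).map B.mulVecLin = LinearMap.range (B * U).mulVecLin := by
  rw [hU, mulVecLin_mul, LinearMap.range_comp]

theorem stmt0_general {p n m : ℕ}
    (A : Matrix (Fin p) (Fin n) ℝ) (B : Matrix (Fin m) (Fin n) ℝ)
    (U : Matrix (Fin n) (Fin (n - p)) ℝ)
    (hUspan : ∀ x : Fin n → ℝ, A.mulVec x = 0 ↔ ∃ y : Fin (n - p) → ℝ, U.mulVec y = x) :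
    (Matrix.fromRows A B).rank = p + m ↔ (A.rank = p ∧ (B * U).rank = m) := by
  have hker : LinearMap.ker A.mulVecLin = LinearMap.range U.mulVecLin := by
    ext x
    exact hUspan x
  have hfull {k : ℕ} {ι : Type} [Fintype ι] (M : Matrix (Fin k) ι ℝ) :
      M.rank = k ↔ Surjective M.mulVec := by
    simpa using M.rank_eq_card_iff_surjective_mulVec
  have hstack := (fromRows A B).rank_eq_card_iff_surjective_mulVec
  rw [Fintype.card_sum, Fintype.card_fin, Fintype.card_fin] at hstack
  rw [hstack, hfull, hfull, surjective_fromRows_mulVec_iff, LinearMap.surjective_prod_iff,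
    map_ker_mulVecLin_eq_range_mul hker, LinearMap.range_eq_top, coe_mulVecLin, coe_mulVecLin]

/-- For `A : p × n` with `p < n`, `B : m × n`, and `U` a matrix whose
columns form a basis of the null space of `A`, the stacked matrix `[A; B]` has full
row rank iff both `A` and `B * U` have full row rank. -/
theorem stmt0 {p n m : ℕ} (hpn : p < n)
    (A : Matrix (Fin p) (Fin n) ℝ) (B : Matrix (Fin m) (Fin n) ℝ)
    (U : Matrix (Fin n) (Fin (n - p)) ℝ)
    (hUindep : LinearIndependent ℝ (fun j : Fin (n - p) => fun i : Fin n => U i j))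
    (hUspan : ∀ x : Fin n → ℝ, A.mulVec x = 0 ↔ ∃ y : Fin (n - p) → ℝ, U.mulVec y = x) :
    (Matrix.fromRows A B).rank = p + m ↔ (A.rank = p ∧ (B * U).rank = m) :=
  stmt0_general A B U hUspan
end

section
/- For all real numbers c, d ≥ 0, t > 0 and β ≥ 0, the inequality (β c² d + 2 t d³)² ≤ (4(1+β)²/t) (c² + t d²)³ holds. -/
theorem mul_sq_mul_add_two_mul_le {u v β : ℝ} (hu : 0 ≤ u) (hv : 0 ≤ v) (hβ : 0 ≤ β) :
    v * (β * u + 2 * v) ^ 2 ≤ 4 * (1 + β) ^ 2 * (u + v) ^ 3 := by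
  have hlin : β * u + 2 * v ≤ 2 * (1 + β) * (u + v) := by nlinarith [mul_nonneg hβ hv]
  calc v * (β * u + 2 * v) ^ 2 ≤ (u + v) * (2 * (1 + β) * (u + v)) ^ 2 := by
        gcongr
        linarith
    _ = 4 * (1 + β) ^ 2 * (u + v) ^ 3 := by ring

theorem stmt1_general (c d t β : ℝ) (ht : 0 < t) (hβ : 0 ≤ β) :
    (β * c ^ 2 * d + 2 * t * d ^ 3) ^ 2 ≤
      (4 * (1 + β) ^ 2 / t) * (c ^ 2 + t * d ^ 2) ^ 3 := by
  rw [div_mul_eq_mul_div, le_div_iff₀ ht]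
  calc (β * c ^ 2 * d + 2 * t * d ^ 3) ^ 2 * t = t * d ^ 2 * (β * c ^ 2 + 2 * (t * d ^ 2)) ^ 2 := by
        ring
    _ ≤ 4 * (1 + β) ^ 2 * (c ^ 2 + t * d ^ 2) ^ 3 :=
        mul_sq_mul_add_two_mul_le (sq_nonneg c) (by positivity) hβ

/-- For `c, d ≥ 0`, `t > 0`, `β ≥ 0`,
`(β c² d + 2 t d³)² ≤ (4(1+β)²/t)(c² + t d²)³`. -/
theorem stmt1 (c d t β : ℝ) (hc : 0 ≤ c) (hd : 0 ≤ d) (ht : 0 < t) (hβ : 0 ≤ β) :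
    (β * c ^ 2 * d + 2 * t * d ^ 3) ^ 2 ≤
      (4 * (1 + β) ^ 2 / t) * (c ^ 2 + t * d ^ 2) ^ 3 :=
  stmt1_general c d t β ht hβ
end

section
/- If nonnegative reals satisfy |T| ≤ β c² d + 2 t d³ where c² = h'∇²ψ(x)h and d² is the barrier Hessian quadratic form, then |T| ≤ (2(1+β)/√t) (c² + t d²)^{3/2}. More precisely: for c, d ≥ 0, t > 0, β ≥ 0, one has β c² d + 2 t d³ ≤ (2(1+β)/√t)(c² + t d²)^{3/2}. -/
/-!
With `r = √(c² + t d²)` one has `c² ≤ r²` and `d √t ≤ r`, so that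
`√t (β c² d + 2 t d³) = β c² (d √t) + 2 (d √t)³ ≤ (β + 2) r³ ≤ 2 (1 + β) r³`.
-/

open Real

lemma mul_sqrt_le_sqrt_sq_add_mul_sq (c d : ℝ) {t : ℝ} (ht : 0 ≤ t) :
    d * √t ≤ √(c ^ 2 + t * d ^ 2) :=
  le_sqrt_of_sq_le <| by nlinarith [sq_sqrt ht, sq_nonneg c]

lemma sqrt_mul_le_add_two_mul_sqrt_pow_three (c d : ℝ) {t β : ℝ} (ht : 0 ≤ t) (hβ : 0 ≤ β) :
    √t * (β * c ^ 2 * d + 2 * t * d ^ 3) ≤ (β + 2) * √(c ^ 2 + t * d ^ 2) ^ 3 := by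
  generalize hr : √(c ^ 2 + t * d ^ 2) = r
  have hr0 : 0 ≤ r := hr ▸ sqrt_nonneg _
  have hc : c ^ 2 ≤ r ^ 2 := by
    rw [← hr, sq_sqrt (by positivity)]
    nlinarith [sq_nonneg d]
  have hd : d * √t ≤ r := hr ▸ mul_sqrt_le_sqrt_sq_add_mul_sq c d ht
  have hd3 : (d * √t) ^ 3 ≤ r ^ 3 := (Odd.pow_le_pow (by decide)).2 hd
  calc √t * (β * c ^ 2 * d + 2 * t * d ^ 3)
      = β * c ^ 2 * (d * √t) + 2 * (d * √t) ^ 3 := by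
        linear_combination (-2 * d ^ 3 * √t) * sq_sqrt ht
    _ ≤ β * c ^ 2 * r + 2 * r ^ 3 := by gcongr
    _ ≤ β * r ^ 2 * r + 2 * r ^ 3 := by gcongr
    _ = (β + 2) * r ^ 3 := by ring

theorem stmt2_general (c d t β : ℝ) (ht : 0 < t) (hβ : 0 ≤ β) :
    β * c ^ 2 * d + 2 * t * d ^ 3 ≤
      (2 * (1 + β) / Real.sqrt t) * (c ^ 2 + t * d ^ 2) ^ ((3 : ℝ) / 2) := by
  rw [rpow_div_two_eq_sqrt _ (by positivity), div_mul_eq_mul_div, le_div_iff₀ (sqrt_pos.2 ht),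
    mul_comm]
  norm_cast
  calc √t * (β * c ^ 2 * d + 2 * t * d ^ 3)
      ≤ (β + 2) * √(c ^ 2 + t * d ^ 2) ^ 3 :=
        sqrt_mul_le_add_two_mul_sqrt_pow_three c d ht.le hβ
    _ ≤ 2 * (1 + β) * √(c ^ 2 + t * d ^ 2) ^ 3 := by gcongr; linarith

/-- For `c, d ≥ 0`, `t > 0`, `β ≥ 0`,
`β c² d + 2 t d³ ≤ (2(1+β)/√t)(c² + t d²)^{3/2}`. -/
theorem stmt2 (c d t β : ℝ) (hc : 0 ≤ c) (hd : 0 ≤ d) (ht : 0 < t) (hβ : 0 ≤ β) :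
    β * c ^ 2 * d + 2 * t * d ^ 3 ≤
      (2 * (1 + β) / Real.sqrt t) * (c ^ 2 + t * d ^ 2) ^ ((3 : ℝ) / 2) :=
  stmt2_general c d t β ht hβ
end

section
/- Let H be symmetric positive definite, A ∈ ℝ^{p×n} full row rank, B ∈ ℝ^{m×n}, and suppose the stacked matrix [A; B] has full row rank. Then the matrix B(H^{−1} − H^{−1}Aᵀ(AH^{−1}Aᵀ)^{−1}AH^{−1})Bᵀ is positive definite. -/
/-!
Put `C = [A; B]`. Since `C` has full row rank, `Cᵀ` is injective, so the Gram matrix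
`C H⁻¹ Cᵀ` is positive definite. Its upper-left block is `A H⁻¹ Aᵀ`, and the dual Hessian
`B H⁻¹ Bᵀ - B H⁻¹ Aᵀ (A H⁻¹ Aᵀ)⁻¹ A H⁻¹ Bᵀ` is precisely the Schur complement of that block;
Schur complements of positive definite matrices are positive definite.
-/

open scoped Matrix

namespace Matrix

variable {m n K : Type*} [Fintype m] [Fintype n] [Field K]

theorem vecMul_injective_of_rank_eq_card {M : Matrix m n K} (h : M.rank = Fintype.card m) :
    Function.Injective M.vecMul := by
  rw [vecMul_injective_iff, linearIndependent_iff_card_eq_finrank_span, Set.finrank,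
    ← rank_eq_finrank_span_row, h]

theorem PosDef.schur_complement_of_fromBlocks₁₁ [DecidableEq m] [PartialOrder K] [StarRing K]
    [StarOrderedRing K] {A : Matrix m m K} {B : Matrix m n K} {D : Matrix n n K}
    (h : (fromBlocks A B Bᴴ D).PosDef) : (D - Bᴴ * A⁻¹ * B).PosDef := by
  have hA : A.PosDef := by
    convert h.submatrix Sum.inl_injective
    ext
    simp
  have := hA.isUnit.invertible
  refine .of_dotProduct_mulVec_pos ((IsHermitian.fromBlocks₁₁ B D hA.1).mp h.1) fun y hy => ?_
  -- the block quadratic form at `(-A⁻¹ B y, y)` reduces to the Schur complement form at `y`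
  have hxy : (-((A⁻¹ * B) *ᵥ y) ⊕ᵥ y) ≠ 0 := fun h0 =>
    hy (by simpa using congrArg (· ∘ Sum.inr) h0)
  have := h.dotProduct_mulVec_pos hxy
  rwa [dotProduct_mulVec, schur_complement_eq₁₁ B D _ _ hA.1, neg_add_cancel, dotProduct_zero,
    zero_add, ← dotProduct_mulVec] at this

end Matrix

open Matrix

theorem stmt19_general {n p m : ℕ} (H : Matrix (Fin n) (Fin n) ℝ) (hH : H.PosDef)
    (A : Matrix (Fin p) (Fin n) ℝ)
    (B : Matrix (Fin m) (Fin n) ℝ)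
    (hAB : (Matrix.fromRows A B).rank = p + m) :
    (B * (H⁻¹ - H⁻¹ * Aᵀ * (A * H⁻¹ * Aᵀ)⁻¹ * A * H⁻¹) * Bᵀ).PosDef := by
  have hHinv : (H⁻¹)ᵀ = H⁻¹ := hH.inv.isHermitian.eq
  have hGram : (fromRows A B * H⁻¹ * (fromRows A B)ᵀ).PosDef :=
    hH.inv.mul_mul_conjTranspose_same (vecMul_injective_of_rank_eq_card (by simpa using hAB))
  have hBlocks : fromRows A B * H⁻¹ * (fromRows A B)ᵀ =
      fromBlocks (A * H⁻¹ * Aᵀ) (A * H⁻¹ * Bᵀ) (A * H⁻¹ * Bᵀ)ᴴ (B * H⁻¹ * Bᵀ) := by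
    simp [transpose_fromRows, fromRows_mul, Matrix.mul_assoc, hHinv]
  have hSchur : B * (H⁻¹ - H⁻¹ * Aᵀ * (A * H⁻¹ * Aᵀ)⁻¹ * A * H⁻¹) * Bᵀ =
      B * H⁻¹ * Bᵀ - (A * H⁻¹ * Bᵀ)ᴴ * (A * H⁻¹ * Aᵀ)⁻¹ * (A * H⁻¹ * Bᵀ) := by
    simp [conjTranspose_eq_transpose_of_trivial, Matrix.mul_sub, Matrix.sub_mul,
      Matrix.mul_assoc, hHinv]
  rw [hSchur]
  exact (hBlocks ▸ hGram).schur_complement_of_fromBlocks₁₁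

/-- For `H` symmetric positive definite, `A` of full row rank, `B`
arbitrary with the stacked matrix `[A; B]` of full row rank, the dual Hessian
`B(H⁻¹ − H⁻¹Aᵀ(AH⁻¹Aᵀ)⁻¹AH⁻¹)Bᵀ` is positive definite. -/
theorem stmt19 {n p m : ℕ} (H : Matrix (Fin n) (Fin n) ℝ) (hH : H.PosDef)
    (A : Matrix (Fin p) (Fin n) ℝ) (hA : A.rank = p)
    (B : Matrix (Fin m) (Fin n) ℝ)
    (hAB : (Matrix.fromRows A B).rank = p + m) :
    (B * (H⁻¹ - H⁻¹ * Aᵀ * (A * H⁻¹ * Aᵀ)⁻¹ * A * H⁻¹) * Bᵀ).PosDef :=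
  stmt19_general H hH A B hAB
end
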